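/- arXiv:math/9805024 — 2 statements merged into one kernel-verified Lean document; each statement's English description precedes it below -/
import Mathlib

section
/- Let μ ≥ 2, let K₀ ∈ ℝ^{μ×μ} be symmetric invertible, let n = μ + 2 and let K ∈ ℝ^{n×n} be the matrix with block form (blocks of sizes 1, μ, 1): [[0, 0, 1],[0, K₀, 0],[1, 0, 0]]. For Λ ∈ ℝ^{μ×μ} and α ∈ ℝ^{1×μ}, z ∈ ℝ, let X_e(α,z) be the (n+1)×(n+1) matrix with block rows (sizes 1, μ, 1, 1): [[0, α, 0, z],[0, 0, −K₀αᵀ, Λᵀαᵀ],[0, 0, 0, 0],[0, 0, 0, 0]], and let M_Λ = {X_e(α,z) : α ∈ ℝ^{1×μ}, z ∈ ℝ}. Then: (a) the elements of M_Λ pairwise commute if and only if Λ = Λᵀ; and (b) if Λ = Λᵀ, then M_Λ is a maximal abelian subalgebra of e(K). -/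
open Matrix

/-- `o(K)`: real matrices `X` with `XK + KXᵀ = 0`. -/
def oK {ι : Type*} [Fintype ι] (K : Matrix ι ι ℝ) : Set (Matrix ι ι ℝ) :=
  {X | X * K + K * Xᵀ = 0}

/-- The extended matrix `E(X, a)` with block form `[[X, a], [0, 0]]`. -/
def Emat {ι : Type*} (X : Matrix ι ι ℝ) (a : ι → ℝ) :
    Matrix (ι ⊕ Unit) (ι ⊕ Unit) ℝ :=
  Matrix.fromBlocks X (Matrix.of fun i _ => a i) 0 0

/-- The Lie algebra `e(K)`, as a set of extended matrices. -/
def eK {ι : Type*} [Fintype ι] (K : Matrix ι ι ℝ) :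
    Set (Matrix (ι ⊕ Unit) (ι ⊕ Unit) ℝ) :=
  {m | ∃ X ∈ oK K, ∃ a : ι → ℝ, m = Emat X a}

/-- `M` is a maximal abelian subalgebra of the matrix Lie algebra (set) `L`:
it is a linear subspace contained in `L`, its elements pairwise commute, and
every element of `L` commuting with all of `M` belongs to `M`. -/
def IsMASA {κ : Type*} [Fintype κ] (L M : Set (Matrix κ κ ℝ)) : Prop :=
  M ⊆ L ∧
  (∀ X ∈ M, ∀ Y ∈ M, X * Y = Y * X) ∧
  (0 : Matrix κ κ ℝ) ∈ M ∧
  (∀ X ∈ M, ∀ Y ∈ M, X + Y ∈ M) ∧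
  (∀ (c : ℝ), ∀ X ∈ M, c • X ∈ M) ∧
  (∀ Y ∈ L, (∀ X ∈ M, Y * X = X * Y) → Y ∈ M)

/-- Index type with blocks of sizes `1, μ, 1`. -/
abbrev Idx4 (μ : ℕ) := Unit ⊕ Fin μ ⊕ Unit

/-- The metric `K = [[0,0,1],[0,K₀,0],[1,0,0]]`. -/
def K4 (μ : ℕ) (K₀ : Matrix (Fin μ) (Fin μ) ℝ) : Matrix (Idx4 μ) (Idx4 μ) ℝ :=
  Matrix.of fun i j =>
    match i, j with
    | Sum.inl _, Sum.inr (Sum.inr _) => 1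
    | Sum.inr (Sum.inr _), Sum.inl _ => 1
    | Sum.inr (Sum.inl a), Sum.inr (Sum.inl b) => K₀ a b
    | _, _ => 0

/-- The `o(K)`-part of `X_e(α, z)`: block rows `[[0, α, 0], [0, 0, -K₀αᵀ], [0, 0, 0]]`. -/
def X4 (μ : ℕ) (K₀ : Matrix (Fin μ) (Fin μ) ℝ) (α : Fin μ → ℝ) :
    Matrix (Idx4 μ) (Idx4 μ) ℝ :=
  Matrix.of fun i j =>
    match i, j with
    | Sum.inl _, Sum.inr (Sum.inl b) => α b
    | Sum.inr (Sum.inl a), Sum.inr (Sum.inr _) => -(∑ l, K₀ a l * α l)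
    | _, _ => 0

/-- The translation part of `X_e(α, z)`: `(z, Λᵀαᵀ, 0)`. -/
def t4 (μ : ℕ) (Λ : Matrix (Fin μ) (Fin μ) ℝ) (α : Fin μ → ℝ) (z : ℝ) :
    Idx4 μ → ℝ :=
  fun i =>
    match i with
    | Sum.inl _ => z
    | Sum.inr (Sum.inl a) => ∑ l, Λ l a * α l
    | Sum.inr (Sum.inr _) => 0

section myaux

lemma Emat_mul' {ι : Type*} [Fintype ι] (X Y : Matrix ι ι ℝ) (a b : ι → ℝ) :
    Emat X a * Emat Y b = Emat (X * Y) (X.mulVec b) := by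
  unfold Emat
  rw [Matrix.fromBlocks_multiply]
  have hB : (X * Matrix.of fun i (_ : Unit) => b i)
      = Matrix.of fun i (_ : Unit) => (X *ᵥ b) i := by
    ext i j
    simp [Matrix.mul_apply, Matrix.mulVec, dotProduct]
  simp [hB]

lemma Emat_inj' {ι : Type*} {X Y : Matrix ι ι ℝ} {a b : ι → ℝ} (h : Emat X a = Emat Y b) :
    X = Y ∧ a = b := by
  constructor
  · ext i j; have := congrFun (congrFun h (Sum.inl i)) (Sum.inl j); simpa [Emat] using this
  · ext i; have := congrFun (congrFun h (Sum.inl i)) (Sum.inr ()); simpa [Emat] using this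

lemma Emat_comm_iff' {ι : Type*} [Fintype ι] {X Y : Matrix ι ι ℝ} {a b : ι → ℝ} :
    Emat X a * Emat Y b = Emat Y b * Emat X a ↔ X * Y = Y * X ∧ X.mulVec b = Y.mulVec a := by
  rw [Emat_mul', Emat_mul']
  exact ⟨Emat_inj', fun ⟨h1, h2⟩ => by rw [h1, h2]⟩

lemma Emat_add' {ι : Type*} (X Y : Matrix ι ι ℝ) (a b : ι → ℝ) :
    Emat X a + Emat Y b = Emat (X + Y) (a + b) := by
  ext (i|i) (j|j) <;> simp [Emat]

lemma Emat_smul' {ι : Type*} (c : ℝ) (X : Matrix ι ι ℝ) (a : ι → ℝ) :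
    c • Emat X a = Emat (c • X) (c • a) := by
  ext (i|i) (j|j) <;> simp [Emat]

variable {μ : ℕ} {K₀ : Matrix (Fin μ) (Fin μ) ℝ}

lemma bil_symm' {Q : Matrix (Fin μ) (Fin μ) ℝ} (hs : Qᵀ = Q) (α α' : Fin μ → ℝ) :
    ∑ b, α b * ∑ l, Q l b * α' l = ∑ b, α' b * ∑ l, Q l b * α l := by
  have hQ : ∀ a b, Q a b = Q b a := fun a b => by
    have := congrFun (congrFun hs b) a; simpa using this
  simp_rw [Finset.mul_sum]
  rw [Finset.sum_comm]
  refine Finset.sum_congr rfl fun b _ => Finset.sum_congr rfl fun l _ => ?_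
  rw [hQ b l]; ring

lemma bil_symm0 (hs : K₀ᵀ = K₀) (α α' : Fin μ → ℝ) :
    ∑ l, α l * ∑ m, K₀ l m * α' m = ∑ l, α' l * ∑ m, K₀ l m * α m := by
  simp_rw [Finset.mul_sum]
  rw [Finset.sum_comm]
  refine Finset.sum_congr rfl fun l _ => Finset.sum_congr rfl fun m _ => ?_
  have h : K₀ m l = K₀ l m := by
    have := congrFun (congrFun hs l) m
    simpa using this
  rw [h]; ring

lemma X4_mul_comm' (hs : K₀ᵀ = K₀) (α α' : Fin μ → ℝ) :
    X4 μ K₀ α * X4 μ K₀ α' = X4 μ K₀ α' * X4 μ K₀ α := by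
  ext i j
  rcases i with i | i | i <;> rcases j with j | j | j <;>
    simp [Matrix.mul_apply, Fintype.sum_sum_type, X4, mul_comm]
  have := bil_symm0 hs α α'
  simp only [Finset.mul_sum] at *
  linarith [this]

lemma X4_mulVec_t4' (Λ : Matrix (Fin μ) (Fin μ) ℝ) (α α' : Fin μ → ℝ) (z' : ℝ) :
    (X4 μ K₀ α) *ᵥ (t4 μ Λ α' z') =
      fun i => match i with
        | Sum.inl _ => ∑ b, α b * ∑ l, Λ l b * α' l
        | _ => 0 := by
  ext i
  rcases i with i | i | i <;>
    simp [Matrix.mulVec, dotProduct, Fintype.sum_sum_type, X4, t4]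

lemma X4_mem_oK' (hs : K₀ᵀ = K₀) (α : Fin μ → ℝ) :
    X4 μ K₀ α * K4 μ K₀ + K4 μ K₀ * (X4 μ K₀ α)ᵀ = 0 := by
  ext i j
  have hK : ∀ a b, K₀ a b = K₀ b a := fun a b => by
    have := congrFun (congrFun hs b) a; simpa using this
  rcases i with i | i | i <;> rcases j with j | j | j <;>
    simp [Matrix.mul_apply, Fintype.sum_sum_type, X4, K4, mul_comm]
  have h1 : (∑ x, K₀ x j * α x) = ∑ l, K₀ j l * α l :=
    Finset.sum_congr rfl fun x _ => by rw [hK]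
  rw [h1]; ring

lemma X4_add' (α α' : Fin μ → ℝ) :
    X4 μ K₀ (α + α') = X4 μ K₀ α + X4 μ K₀ α' := by
  ext i j
  rcases i with i | i | i <;> rcases j with j | j | j <;>
    simp [X4, mul_add, Finset.sum_add_distrib] <;> ring

lemma X4_smul' (c : ℝ) (α : Fin μ → ℝ) :
    X4 μ K₀ (c • α) = c • X4 μ K₀ α := by
  ext i j
  rcases i with i | i | i <;> rcases j with j | j | j <;>
    simp [X4, Finset.mul_sum]
  ring_nf
  refine Finset.sum_congr rfl fun l _ => by ring

lemma t4_add' (Λ : Matrix (Fin μ) (Fin μ) ℝ) (α α' : Fin μ → ℝ) (z z' : ℝ) :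
    t4 μ Λ (α + α') (z + z') = t4 μ Λ α z + t4 μ Λ α' z' := by
  ext i
  rcases i with i | i | i <;> simp [t4, mul_add, Finset.sum_add_distrib]

lemma t4_smul' (Λ : Matrix (Fin μ) (Fin μ) ℝ) (c : ℝ) (α : Fin μ → ℝ) (z : ℝ) :
    t4 μ Λ (c • α) (c * z) = c • t4 μ Λ α z := by
  ext i
  rcases i with i | i | i <;> simp [t4, Finset.mul_sum]
  refine Finset.sum_congr rfl fun l _ => by ring

end myaux

/-- (a) the matrices `X_e(α,z)` pairwise commute iff `Λ = Λᵀ`;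
(b) if `Λ = Λᵀ` then `M_Λ` is a MASA of `e(K)`. -/
theorem stmt4 (μ : ℕ) (hμ : 2 ≤ μ) (K₀ : Matrix (Fin μ) (Fin μ) ℝ)
    (hs : K₀ᵀ = K₀) (hi : IsUnit K₀) (Λ : Matrix (Fin μ) (Fin μ) ℝ) :
    ((∀ (α α' : Fin μ → ℝ) (z z' : ℝ),
        Emat (X4 μ K₀ α) (t4 μ Λ α z) * Emat (X4 μ K₀ α') (t4 μ Λ α' z') =
          Emat (X4 μ K₀ α') (t4 μ Λ α' z') * Emat (X4 μ K₀ α) (t4 μ Λ α z)) ↔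
      Λᵀ = Λ) ∧
    (Λᵀ = Λ →
      IsMASA (eK (K4 μ K₀))
        {m | ∃ (α : Fin μ → ℝ) (z : ℝ), m = Emat (X4 μ K₀ α) (t4 μ Λ α z)}) := by
  have hcrit : ∀ (α α' : Fin μ → ℝ) (z z' : ℝ),
      (Emat (X4 μ K₀ α) (t4 μ Λ α z) * Emat (X4 μ K₀ α') (t4 μ Λ α' z') =
        Emat (X4 μ K₀ α') (t4 μ Λ α' z') * Emat (X4 μ K₀ α) (t4 μ Λ α z)) ↔
      (∑ b, α b * ∑ l, Λ l b * α' l) = (∑ b, α' b * ∑ l, Λ l b * α l) := by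
    intro α α' z z'
    rw [Emat_comm_iff', X4_mulVec_t4' Λ α α' z', X4_mulVec_t4' Λ α' α z]
    constructor
    · rintro ⟨-, h⟩
      simpa using congrFun h (Sum.inl ())
    · intro h
      refine ⟨X4_mul_comm' hs α α', ?_⟩
      ext i
      rcases i with i | i | i <;> simp [h]
  constructor
  · constructor
    · intro h
      ext l b
      have h2 := (hcrit (fun c => if c = b then 1 else 0)
        (fun c => if c = l then 1 else 0) 0 0).mp (h _ _ 0 0)
      simpa using h2.symm
    · intro hΛ α α' z z'
      exact (hcrit α α' z z').mpr (bil_symm' hΛ α α')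
  · intro hΛ
    have hΛ' : ∀ a b, Λ a b = Λ b a := fun a b => by
      have := congrFun (congrFun hΛ b) a; simpa using this
    refine ⟨?_, ?_, ?_, ?_, ?_, ?_⟩
    · rintro m ⟨α, z, rfl⟩
      exact ⟨X4 μ K₀ α, X4_mem_oK' hs α, t4 μ Λ α z, rfl⟩
    · rintro m ⟨α, z, rfl⟩ m' ⟨α', z', rfl⟩
      exact (hcrit α α' z z').mpr (bil_symm' hΛ α α')
    · refine ⟨0, 0, ?_⟩
      ext i j
      rcases i with ((i|i|i)|i) <;> rcases j with ((j|j|j)|j) <;>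
        simp [Emat, X4, t4]
    · rintro m ⟨α, z, rfl⟩ m' ⟨α', z', rfl⟩
      exact ⟨α + α', z + z', by rw [Emat_add', X4_add', t4_add']⟩
    · rintro c m ⟨α, z, rfl⟩
      exact ⟨c • α, c * z, by rw [Emat_smul', X4_smul', t4_smul']⟩
    · rintro Y ⟨X, hXo, a, rfl⟩ hcm
      have key : ∀ (α' : Fin μ → ℝ) (z' : ℝ),
          X * X4 μ K₀ α' = X4 μ K₀ α' * X ∧
          X *ᵥ t4 μ Λ α' z' = X4 μ K₀ α' *ᵥ a := fun α' z' =>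
        Emat_comm_iff'.mp (hcm _ ⟨α', z', rfl⟩)
      have Ec : ∀ (α' : Fin μ → ℝ) i j, (X * X4 μ K₀ α') i j = (X4 μ K₀ α' * X) i j :=
        fun α' i j => congrFun (congrFun (key α' 0).1 i) j
      have Em : ∀ (α' : Fin μ → ℝ) (z' : ℝ) i,
          (X *ᵥ t4 μ Λ α' z') i = (X4 μ K₀ α' *ᵥ a) i :=
        fun α' z' i => congrFun (key α' z').2 i
      -- inverse vectors
      have hdet : IsUnit K₀.det := (Matrix.isUnit_iff_isUnit_det K₀).mp hi
      set β : Fin μ → Fin μ → ℝ := fun a0 => K₀⁻¹ *ᵥ Pi.single a0 1 with hβdef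
      have hβ : ∀ (a0 x : Fin μ), (∑ l, K₀ x l * β a0 l) = if x = a0 then 1 else 0 := by
        intro a0 x
        have h1 : K₀ *ᵥ β a0 = Pi.single a0 1 := by
          rw [hβdef]
          rw [Matrix.mulVec_mulVec, Matrix.mul_nonsing_inv _ hdet, Matrix.one_mulVec]
        have h2 := congrFun h1 x
        simpa [Matrix.mulVec, dotProduct, Pi.single_apply] using h2
      set αv : Fin μ → ℝ := fun b => X (Sum.inl ()) (Sum.inr (Sum.inl b)) with hαv
      set x00 : ℝ := X (Sum.inl ()) (Sum.inl ()) with hx00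
      -- entry equations
      have e1 : ∀ b, X (Sum.inr (Sum.inl b)) (Sum.inl ()) = 0 := by
        intro b
        have h1 := Ec (fun c => if c = b then 1 else 0) (Sum.inl ()) (Sum.inl ())
        simp [Matrix.mul_apply, Fintype.sum_sum_type, X4] at h1
        exact h1.symm
      have e2 : ∀ b c, X (Sum.inr (Sum.inl b)) (Sum.inr (Sum.inl c))
          = if c = b then x00 else 0 := by
        intro b c
        have h2 := Ec (fun c' => if c' = b then 1 else 0) (Sum.inl ()) (Sum.inr (Sum.inl c))
        simp [Matrix.mul_apply, Fintype.sum_sum_type, X4] at h2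
        rw [← h2, hx00]
      have o1 : X (Sum.inl ()) (Sum.inr (Sum.inr ())) = 0 := by
        have h1 := congrFun (congrFun hXo (Sum.inl ())) (Sum.inl ())
        simpa [Matrix.mul_apply, Fintype.sum_sum_type, K4] using h1
      have o2 : x00 + X (Sum.inr (Sum.inr ())) (Sum.inr (Sum.inr ())) = 0 := by
        have h1 := congrFun (congrFun hXo (Sum.inl ())) (Sum.inr (Sum.inr ()))
        simpa [Matrix.mul_apply, Fintype.sum_sum_type, K4, hx00] using h1
      have e4 : X (Sum.inr (Sum.inr ())) (Sum.inl ()) = 0 := by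
        have h4 := Ec (β ⟨0, by omega⟩) (Sum.inr (Sum.inl ⟨0, by omega⟩)) (Sum.inl ())
        simp [Matrix.mul_apply, Fintype.sum_sum_type, X4, hβ] at h4
        exact h4
      have e5 : ∀ c, X (Sum.inr (Sum.inr ())) (Sum.inr (Sum.inl c)) = 0 := by
        intro c
        have h5 := Ec (β ⟨0, by omega⟩) (Sum.inr (Sum.inl ⟨0, by omega⟩)) (Sum.inr (Sum.inl c))
        simp [Matrix.mul_apply, Fintype.sum_sum_type, X4, hβ, e1] at h5
        exact h5
      have e6 : X (Sum.inr (Sum.inr ())) (Sum.inr (Sum.inr ())) = x00 := by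
        have h6 := Ec (β ⟨0, by omega⟩) (Sum.inr (Sum.inl ⟨0, by omega⟩)) (Sum.inr (Sum.inr ()))
        simp only [Matrix.mul_apply, Fintype.sum_sum_type, X4] at h6
        simp [hβ, e2] at h6
        exact h6.symm
      have hx0 : x00 = 0 := by
        have := o2; rw [e6] at this; linarith
      have e3 : ∀ b, X (Sum.inr (Sum.inl b)) (Sum.inr (Sum.inr ()))
          = -(∑ l, K₀ b l * αv l) := by
        intro b
        have h3 := Ec (fun c => if c = b then 1 else 0) (Sum.inl ()) (Sum.inr (Sum.inr ()))
        simp [Matrix.mul_apply, Fintype.sum_sum_type, X4] at h3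
        rw [← h3]
        have : (∑ l, K₀ b l * αv l) = ∑ x, X (Sum.inl ()) (Sum.inr (Sum.inl x)) * K₀ x b := by
          refine Finset.sum_congr rfl fun x _ => ?_
          have hK : K₀ b x = K₀ x b := by
            have := congrFun (congrFun hs x) b; simpa using this
          rw [hK, hαv]; ring
        rw [this]
      have hXeq : X = X4 μ K₀ αv := by
        ext i j
        rcases i with ⟨⟩ | i | ⟨⟩ <;> rcases j with ⟨⟩ | j | ⟨⟩
        · exact hx0
        · rfl
        · exact o1
        · exact e1 i
        · exact (e2 i j).trans (by rw [hx0]; simp [X4])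
        · exact e3 i
        · exact e4
        · exact e5 j
        · exact e6.trans hx0
      -- translation part
      have m2 : a (Sum.inr (Sum.inr ())) = 0 := by
        have h := Em (β ⟨0, by omega⟩) 0 (Sum.inr (Sum.inl ⟨0, by omega⟩))
        rw [hXeq] at h
        simp [Matrix.mulVec, dotProduct, Fintype.sum_sum_type, X4, t4, hβ] at h
        exact h
      have m1 : ∀ b, a (Sum.inr (Sum.inl b)) = ∑ l, Λ l b * αv l := by
        intro b
        have h := Em (fun c => if c = b then 1 else 0) 0 (Sum.inl ())
        simp [Matrix.mulVec, dotProduct, Fintype.sum_sum_type, X4, t4] at h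
        rw [← h]
        refine Finset.sum_congr rfl fun x _ => ?_
        rw [hΛ' x b, hαv]; ring
      have haeq : a = t4 μ Λ αv (a (Sum.inl ())) := by
        ext i
        rcases i with i | i | i
        · cases i; rfl
        · simp [t4, m1 i]
        · cases i; simpa [t4] using m2
      exact ⟨αv, a (Sum.inl ()), by conv_lhs => rw [hXeq, haeq]⟩
end

section
/- Let m₁, m₂ ≥ 1, let K₁ ∈ ℝ^{m₁×m₁} and K₂ ∈ ℝ^{m₂×m₂} be symmetric invertible, and let K = diag(K₁, K₂). Let M₁ ⊆ o(K₁) and M₂ ⊆ o(K₂) be abelian Lie subalgebras all of whose elements are nilpotent matrices. Then M = {diag(X₁, X₂) : X₁ ∈ M₁, X₂ ∈ M₂} is not a maximal abelian subalgebra of o(K). -/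
open Matrix

/-!
Commuting nilpotent endomorphisms of a nonzero finite-dimensional space have a common kernel
vector: a minimal nonzero subspace invariant under the family is killed by each of its members,
because its intersection with the kernel of one of them is again invariant and nonzero.
Choose such vectors `K₁ u₁` for `M₁` and `K₂ u₂` for `M₂`; skewness with respect to `Kᵢ` makes `uᵢ`
a common left kernel vector as well. The off-diagonal matrix
`[[0, (K₁ u₁) u₂ᵀ], [-(K₂ u₂) u₁ᵀ, 0]]` then lies in `o(K)` (by symmetry of `Kᵢ`) and commutes
with every `diag(X₁, X₂) ∈ M`, but it is not block diagonal.
-/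

open Set

namespace Module.End

variable {K V : Type*} [Field K] [AddCommGroup V] [Module K V] [FiniteDimensional K V]

lemma exists_mem_ne_zero_apply_eq_zero_of_isNilpotent {f : End K V} (hf : IsNilpotent f)
    {W : Submodule K V} (hW : W ≠ ⊥) (hfW : MapsTo f W W) : ∃ w ∈ W, w ≠ 0 ∧ f w = 0 := by
  have : Nontrivial W := Submodule.nontrivial_iff_ne_bot.2 hW
  have hker : LinearMap.ker (f.restrict hfW) ≠ ⊥ := fun h =>
    (isNilpotent.restrict hfW hf).not_isUnit ((LinearMap.isUnit_iff_ker_eq_bot _).2 h)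
  obtain ⟨w, hw, hw0⟩ := Submodule.exists_mem_ne_zero_of_ne_bot hker
  exact ⟨w, w.2, by simpa using hw0, congr_arg Subtype.val (LinearMap.mem_ker.1 hw)⟩

theorem exists_ne_zero_forall_apply_eq_zero_of_isNilpotent [Nontrivial V] {S : Set (End K V)}
    (hcomm : ∀ f ∈ S, ∀ g ∈ S, Commute f g) (hnil : ∀ f ∈ S, IsNilpotent f) :
    ∃ v ≠ 0, ∀ f ∈ S, f v = 0 := by
  let invariant : Set (Submodule K V) := {W | W ≠ ⊥ ∧ ∀ g ∈ S, MapsTo g W W}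
  obtain ⟨W, ⟨hW, hWS⟩, hmin⟩ :=
    wellFounded_lt.has_min invariant ⟨⊤, top_ne_bot, fun g _ => mapsTo_univ g _⟩
  have hWker : ∀ f ∈ S, W ≤ LinearMap.ker f := by
    intro f hf
    obtain ⟨w, hwW, hw0, hfw⟩ :=
      exists_mem_ne_zero_apply_eq_zero_of_isNilpotent (hnil f hf) hW (hWS f hf)
    have hinv : W ⊓ LinearMap.ker f ∈ invariant := by
      refine ⟨(Submodule.ne_bot_iff _).2 ⟨w, ⟨hwW, hfw⟩, hw0⟩, fun g hg x ⟨hxW, hxf⟩ =>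
        ⟨hWS g hg hxW, ?_⟩⟩
      rw [SetLike.mem_coe, LinearMap.mem_ker] at hxf ⊢
      rw [← Module.End.mul_apply, (hcomm f hf g hg).eq, Module.End.mul_apply, hxf, map_zero]
    exact inf_eq_left.1 (eq_of_le_of_not_lt inf_le_left (hmin _ hinv))
  obtain ⟨v, hvW, hv⟩ := W.ne_bot_iff.1 hW
  exact ⟨v, hv, fun f hf => hWker f hf hvW⟩

end Module.End

theorem Matrix.exists_ne_zero_forall_mulVec_eq_zero_of_isNilpotent {n K : Type*} [Field K]
    [Fintype n] [DecidableEq n] [Nonempty n] {S : Set (Matrix n n K)}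
    (hcomm : ∀ X ∈ S, ∀ Y ∈ S, Commute X Y) (hnil : ∀ X ∈ S, IsNilpotent X) :
    ∃ v ≠ 0, ∀ X ∈ S, X *ᵥ v = 0 := by
  obtain ⟨v, hv, hker⟩ := Module.End.exists_ne_zero_forall_apply_eq_zero_of_isNilpotent
    (S := toLinAlgEquiv' '' S)
    (by rintro _ ⟨X, hX, rfl⟩ _ ⟨Y, hY, rfl⟩; exact (hcomm X hX Y hY).map _)
    (by rintro _ ⟨X, hX, rfl⟩; exact (hnil X hX).map _)
  exact ⟨v, hv, fun X hX => hker _ ⟨X, hX, rfl⟩⟩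

section oK

variable {ι κ : Type*} [Fintype ι] [Fintype κ]

lemma vecMul_eq_zero_of_mem_oK [DecidableEq ι] {K X : Matrix ι ι ℝ} (hK : IsUnit K)
    (hX : X ∈ oK K) {u : ι → ℝ} (hu : X *ᵥ (K *ᵥ u) = 0) : u ᵥ* X = 0 := by
  have hKX : K * Xᵀ = -(X * K) := eq_neg_of_add_eq_zero_right hX
  apply mulVec_injective_of_isUnit hK
  rw [← mulVec_transpose, mulVec_mulVec, hKX, neg_mulVec, ← mulVec_mulVec, hu, neg_zero,
    mulVec_zero]

def crossMatrix (K₁ : Matrix ι ι ℝ) (K₂ : Matrix κ κ ℝ) (u₁ : ι → ℝ) (u₂ : κ → ℝ) :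
    Matrix (ι ⊕ κ) (ι ⊕ κ) ℝ :=
  fromBlocks 0 (vecMulVec (K₁ *ᵥ u₁) u₂) (-vecMulVec (K₂ *ᵥ u₂) u₁) 0

lemma crossMatrix_mem_oK {K₁ : Matrix ι ι ℝ} {K₂ : Matrix κ κ ℝ} (hs₁ : K₁ᵀ = K₁)
    (hs₂ : K₂ᵀ = K₂) (u₁ : ι → ℝ) (u₂ : κ → ℝ) :
    crossMatrix K₁ K₂ u₁ u₂ ∈ oK (fromBlocks K₁ 0 0 K₂) := by
  have h₁ : u₁ ᵥ* K₁ = K₁ *ᵥ u₁ := by rw [← mulVec_transpose, hs₁]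
  have h₂ : u₂ ᵥ* K₂ = K₂ *ᵥ u₂ := by rw [← mulVec_transpose, hs₂]
  simp [oK, crossMatrix, fromBlocks_transpose, fromBlocks_multiply, fromBlocks_add,
    transpose_vecMulVec, vecMulVec_mul, mul_vecMulVec, h₁, h₂]

lemma crossMatrix_commute {K₁ X₁ : Matrix ι ι ℝ} {K₂ X₂ : Matrix κ κ ℝ} {u₁ : ι → ℝ}
    {u₂ : κ → ℝ} (hr₁ : X₁ *ᵥ (K₁ *ᵥ u₁) = 0) (hl₁ : u₁ ᵥ* X₁ = 0)
    (hr₂ : X₂ *ᵥ (K₂ *ᵥ u₂) = 0) (hl₂ : u₂ ᵥ* X₂ = 0) :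
    Commute (crossMatrix K₁ K₂ u₁ u₂) (fromBlocks X₁ 0 0 X₂) := by
  have hYX : crossMatrix K₁ K₂ u₁ u₂ * fromBlocks X₁ 0 0 X₂ = 0 := by
    ext (i | i) (j | j) <;>
      simp [crossMatrix, fromBlocks_multiply, vecMulVec_mul, hl₁, hl₂, vecMulVec_apply]
  have hXY : fromBlocks X₁ 0 0 X₂ * crossMatrix K₁ K₂ u₁ u₂ = 0 := by
    ext (i | i) (j | j) <;> simp [crossMatrix, fromBlocks_multiply, mul_vecMulVec, hr₁, hr₂]
  rw [Commute, SemiconjBy, hYX, hXY]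

lemma crossMatrix_ne_fromBlocks {K₁ Z₁ : Matrix ι ι ℝ} {K₂ Z₂ : Matrix κ κ ℝ} {u₁ : ι → ℝ}
    {u₂ : κ → ℝ} (h₁ : K₁ *ᵥ u₁ ≠ 0) (h₂ : u₂ ≠ 0) :
    crossMatrix K₁ K₂ u₁ u₂ ≠ fromBlocks Z₁ 0 0 Z₂ := by
  rw [crossMatrix, Ne, fromBlocks_inj]
  obtain ⟨i, hi⟩ := Function.ne_iff.1 h₁
  obtain ⟨j, hj⟩ := Function.ne_iff.1 h₂
  exact fun h => mul_ne_zero hi hj congr($(h.2.1) i j)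

end oK

theorem stmt9_general (m₁ m₂ : ℕ) (h₁ : 1 ≤ m₁) (h₂ : 1 ≤ m₂)
    (K₁ : Matrix (Fin m₁) (Fin m₁) ℝ) (K₂ : Matrix (Fin m₂) (Fin m₂) ℝ)
    (hs₁ : K₁ᵀ = K₁) (hi₁ : IsUnit K₁) (hs₂ : K₂ᵀ = K₂) (hi₂ : IsUnit K₂)
    (M₁ : Set (Matrix (Fin m₁) (Fin m₁) ℝ)) (M₂ : Set (Matrix (Fin m₂) (Fin m₂) ℝ))
    (hM₁sub : M₁ ⊆ oK K₁)
    (hM₁ab : ∀ X ∈ M₁, ∀ Y ∈ M₁, X * Y = Y * X)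
    (hM₁nil : ∀ X ∈ M₁, IsNilpotent X)
    (hM₂sub : M₂ ⊆ oK K₂)
    (hM₂ab : ∀ X ∈ M₂, ∀ Y ∈ M₂, X * Y = Y * X)
    (hM₂nil : ∀ X ∈ M₂, IsNilpotent X) :
    ¬ IsMASA (oK (Matrix.fromBlocks K₁ 0 0 K₂))
      {m | ∃ X₁ ∈ M₁, ∃ X₂ ∈ M₂, m = Matrix.fromBlocks X₁ 0 0 X₂} := by
  rintro ⟨-, -, -, -, -, hmax⟩
  have : Nonempty (Fin m₁) := Fin.pos_iff_nonempty.1 h₁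
  have : Nonempty (Fin m₂) := Fin.pos_iff_nonempty.1 h₂
  obtain ⟨v₁, hv₁, hker₁⟩ := exists_ne_zero_forall_mulVec_eq_zero_of_isNilpotent hM₁ab hM₁nil
  obtain ⟨v₂, hv₂, hker₂⟩ := exists_ne_zero_forall_mulVec_eq_zero_of_isNilpotent hM₂ab hM₂nil
  obtain ⟨u₁, rfl⟩ := mulVec_surjective_iff_isUnit.2 hi₁ v₁
  obtain ⟨u₂, rfl⟩ := mulVec_surjective_iff_isUnit.2 hi₂ v₂
  have hcomm : ∀ X ∈ {m | ∃ X₁ ∈ M₁, ∃ X₂ ∈ M₂, m = Matrix.fromBlocks X₁ 0 0 X₂},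
      crossMatrix K₁ K₂ u₁ u₂ * X = X * crossMatrix K₁ K₂ u₁ u₂ := by
    rintro _ ⟨X₁, hX₁, X₂, hX₂, rfl⟩
    exact crossMatrix_commute (hker₁ X₁ hX₁)
      (vecMul_eq_zero_of_mem_oK hi₁ (hM₁sub hX₁) (hker₁ X₁ hX₁)) (hker₂ X₂ hX₂)
      (vecMul_eq_zero_of_mem_oK hi₂ (hM₂sub hX₂) (hker₂ X₂ hX₂))
  obtain ⟨Z₁, -, Z₂, -, hZ⟩ := hmax _ (crossMatrix_mem_oK hs₁ hs₂ u₁ u₂) hcomm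
  exact crossMatrix_ne_fromBlocks hv₁ (by rintro rfl; exact hv₂ (mulVec_zero K₂)) hZ

/-- If `M₁ ⊆ o(K₁)` and `M₂ ⊆ o(K₂)` are abelian Lie subalgebras consisting of
nilpotent matrices, then the block-diagonal sum `{diag(X₁, X₂)}` is not a MASA
of `o(diag(K₁, K₂))`. -/
theorem stmt9 (m₁ m₂ : ℕ) (h₁ : 1 ≤ m₁) (h₂ : 1 ≤ m₂)
    (K₁ : Matrix (Fin m₁) (Fin m₁) ℝ) (K₂ : Matrix (Fin m₂) (Fin m₂) ℝ)
    (hs₁ : K₁ᵀ = K₁) (hi₁ : IsUnit K₁) (hs₂ : K₂ᵀ = K₂) (hi₂ : IsUnit K₂)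
    (M₁ : Set (Matrix (Fin m₁) (Fin m₁) ℝ)) (M₂ : Set (Matrix (Fin m₂) (Fin m₂) ℝ))
    (hM₁sub : M₁ ⊆ oK K₁)
    (hM₁ab : ∀ X ∈ M₁, ∀ Y ∈ M₁, X * Y = Y * X)
    (hM₁0 : (0 : Matrix (Fin m₁) (Fin m₁) ℝ) ∈ M₁)
    (hM₁add : ∀ X ∈ M₁, ∀ Y ∈ M₁, X + Y ∈ M₁)
    (hM₁smul : ∀ (c : ℝ), ∀ X ∈ M₁, c • X ∈ M₁)
    (hM₁nil : ∀ X ∈ M₁, IsNilpotent X)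
    (hM₂sub : M₂ ⊆ oK K₂)
    (hM₂ab : ∀ X ∈ M₂, ∀ Y ∈ M₂, X * Y = Y * X)
    (hM₂0 : (0 : Matrix (Fin m₂) (Fin m₂) ℝ) ∈ M₂)
    (hM₂add : ∀ X ∈ M₂, ∀ Y ∈ M₂, X + Y ∈ M₂)
    (hM₂smul : ∀ (c : ℝ), ∀ X ∈ M₂, c • X ∈ M₂)
    (hM₂nil : ∀ X ∈ M₂, IsNilpotent X) :
    ¬ IsMASA (oK (Matrix.fromBlocks K₁ 0 0 K₂))
      {m | ∃ X₁ ∈ M₁, ∃ X₂ ∈ M₂, m = Matrix.fromBlocks X₁ 0 0 X₂} :=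
  stmt9_general m₁ m₂ h₁ h₂ K₁ K₂ hs₁ hi₁ hs₂ hi₂ M₁ M₂ hM₁sub hM₁ab hM₁nil hM₂sub hM₂ab hM₂nil
end
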